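/- arXiv:math/9806118 — 2 statements merged into one kernel-verified Lean document; each statement's English description precedes it below -/
import Mathlib

section
/- For sl(2,ℂ) and λ ∈ ℕ, the complex 0 → M_λ* → M_{-λ-2}* → 0, where the map sends ξ_λ^k ↦ (appropriate scalar)·ξ_{-λ-2}^{k-λ-1} (zero for k ≤ λ), is a complex of sl(2,ℂ)-modules whose kernel is the (λ+1)-dimensional irreducible module R_λ and whose cokernel is zero; in terms of formal characters, char R_λ = char M_λ - char M_{-λ-2} = (e^λ - e^{-λ-2})/(1 - e^{-2}). -/
/-- Carrier `ℕ →₀ ℂ` of the dual Verma module `M_μ*` for `sl(2,ℂ)`, basis `ξ^k`. -/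
abbrev DualVermaCarrier : Type := ℕ →₀ ℂ

/-- Dual Verma: `h·ξ^k = (μ - 2k)·ξ^k`. -/
noncomputable def Hd (μ : ℂ) : DualVermaCarrier →ₗ[ℂ] DualVermaCarrier :=
  Finsupp.lsum ℂ fun k =>
    LinearMap.toSpanSingleton ℂ DualVermaCarrier ((μ - 2 * (k : ℂ)) • Finsupp.single k 1)

/-- Dual Verma: `e·ξ^k = -ξ^{k-1}`, with `ξ^{-1} = 0`. -/
noncomputable def Ed : DualVermaCarrier →ₗ[ℂ] DualVermaCarrier :=
  Finsupp.lsum ℂ fun k =>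
    LinearMap.toSpanSingleton ℂ DualVermaCarrier
      (if k = 0 then 0 else (-1 : ℂ) • Finsupp.single (k - 1) 1)

/-- Dual Verma: `f·ξ^k = -(k+1)(μ-k)·ξ^{k+1}`. -/
noncomputable def Fd (μ : ℂ) : DualVermaCarrier →ₗ[ℂ] DualVermaCarrier :=
  Finsupp.lsum ℂ fun k =>
    LinearMap.toSpanSingleton ℂ DualVermaCarrier
      ((-((k : ℂ) + 1) * (μ - (k : ℂ))) • Finsupp.single (k + 1) 1)

open Classical in
/-- The formal character `e^μ/(1-e^{-2}) = ∑_{k≥0} e^{μ-2k}` of the (dual) Verma module,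
as a multiplicity function on the weight lattice ℤ. -/
noncomputable def charHalf (μ : ℤ) : ℤ → ℤ :=
  fun m => if ∃ k : ℕ, m = μ - 2 * k then 1 else 0

noncomputable def dmap (n : ℕ) : DualVermaCarrier →ₗ[ℂ] DualVermaCarrier :=
  Finsupp.lsum ℂ fun k =>
    LinearMap.toSpanSingleton ℂ DualVermaCarrier
      (if k ≤ n then 0 else Finsupp.single (k - (n + 1)) 1)

lemma dmap_single (n k : ℕ) (c : ℂ) :
    dmap n (Finsupp.single k c)
      = c • (if k ≤ n then 0 else Finsupp.single (k - (n + 1)) (1:ℂ)) := by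
  simp [dmap, LinearMap.toSpanSingleton_apply]

lemma Hd_single (μ : ℂ) (k : ℕ) (c : ℂ) :
    Hd μ (Finsupp.single k c) = (c * (μ - 2 * k)) • Finsupp.single k 1 := by
  rw [Hd, Finsupp.lsum_single, LinearMap.toSpanSingleton_apply, smul_smul]

lemma Ed_single (k : ℕ) (c : ℂ) :
    Ed (Finsupp.single k c)
      = c • (if k = 0 then 0 else (-1:ℂ) • Finsupp.single (k-1) (1:ℂ)) := by
  simp [Ed, LinearMap.toSpanSingleton_apply]

lemma Fd_single (μ : ℂ) (k : ℕ) (c : ℂ) :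
    Fd μ (Finsupp.single k c)
      = (c * (-((k:ℂ)+1) * (μ - k))) • Finsupp.single (k+1) 1 := by
  rw [Fd, Finsupp.lsum_single, LinearMap.toSpanSingleton_apply, smul_smul]

lemma dmap_apply (n : ℕ) (x : DualVermaCarrier) (m : ℕ) :
    dmap n x m = x (m + (n + 1)) := by
  induction x using Finsupp.induction_linear with
  | zero => simp
  | add f g hf hg => simp [hf, hg]
  | single a b =>
      rw [dmap_single]
      by_cases h : a ≤ n
      · rw [if_pos h, smul_zero, Finsupp.coe_zero, Pi.zero_apply, Finsupp.single_apply,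
          if_neg (by omega)]
      · rw [if_neg h, Finsupp.smul_apply, Finsupp.single_apply, Finsupp.single_apply,
          smul_eq_mul]
        by_cases h2 : a = m + (n+1)
        · rw [if_pos (by omega), if_pos h2, mul_one]
        · rw [if_neg (by omega), if_neg h2, mul_zero]

lemma Hd_apply (μ : ℂ) (x : DualVermaCarrier) (m : ℕ) :
    Hd μ x m = (μ - 2 * m) * x m := by
  induction x using Finsupp.induction_linear with
  | zero => simp
  | add f g hf hg => simp [hf, hg]; ring
  | single a b =>
      rw [Hd_single, Finsupp.smul_apply, Finsupp.single_apply, Finsupp.single_apply]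
      by_cases h : a = m <;> simp [h] <;> ring

lemma Ed_apply (x : DualVermaCarrier) (m : ℕ) :
    Ed x m = - x (m + 1) := by
  induction x using Finsupp.induction_linear with
  | zero => simp
  | add f g hf hg => simp [hf, hg]; ring
  | single a b =>
      rw [Ed_single]
      by_cases h : a = 0
      · simp [h, Finsupp.single_apply]
      · obtain ⟨a', rfl⟩ : ∃ a', a = a' + 1 := ⟨a - 1, by omega⟩
        simp only [h, if_false, Finsupp.smul_apply, Finsupp.single_apply, smul_eq_mul]
        have e : a' + 1 - 1 = a' := rfl
        rw [e]
        by_cases h2 : a' = m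
        · rw [if_pos h2, if_pos (by omega)]; ring
        · rw [if_neg h2, if_neg (by omega)]; ring

lemma Fd_apply_succ (μ : ℂ) (x : DualVermaCarrier) (m : ℕ) :
    Fd μ x (m + 1) = (-((m:ℂ)+1) * (μ - m)) * x m := by
  induction x using Finsupp.induction_linear with
  | zero => simp
  | add f g hf hg => simp [hf, hg]; ring
  | single a b =>
      rw [Fd_single, Finsupp.smul_apply, Finsupp.single_apply, Finsupp.single_apply]
      by_cases h : a = m <;> simp [h] <;> first | ring | omega

lemma Fd_apply_zero (μ : ℂ) (x : DualVermaCarrier) :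
    Fd μ x 0 = 0 := by
  induction x using Finsupp.induction_linear with
  | zero => simp
  | add f g hf hg => simp [hf, hg]
  | single a b =>
      rw [Fd_single, Finsupp.smul_apply, Finsupp.single_apply]
      simp

lemma mem_ker_iff (n : ℕ) (x : DualVermaCarrier) :
    x ∈ LinearMap.ker (dmap n) ↔ ∀ k, n < k → x k = 0 := by
  rw [LinearMap.mem_ker]
  constructor
  · intro h k hk
    have := Finsupp.ext_iff.mp h (k - (n+1))
    rw [dmap_apply, show k - (n+1) + (n+1) = k by omega] at this
    simpa using this
  · intro h
    ext m
    rw [dmap_apply]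
    simpa using h (m + (n+1)) (by omega)

lemma dmap_surj (n : ℕ) : Function.Surjective (dmap n) := by
  intro y
  refine ⟨Finsupp.mapDomain (· + (n+1)) y, ?_⟩
  ext m
  rw [dmap_apply]
  exact Finsupp.mapDomain_apply (fun a b h => by omega) y m

lemma ker_eq (n : ℕ) :
    LinearMap.ker (dmap n) = Finsupp.supported ℂ ℂ ↑(Finset.range (n+1)) := by
  ext x
  rw [mem_ker_iff, Finsupp.mem_supported']
  simp only [Finset.mem_coe, Finset.mem_range]
  constructor
  · intro h k hk; exact h k (by omega)
  · intro h k hk; exact h k (by omega)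

lemma finrank_ker (n : ℕ) : Module.finrank ℂ (LinearMap.ker (dmap n)) = n + 1 := by
  rw [ker_eq]
  rw [LinearEquiv.finrank_eq
    (Finsupp.supportedEquivFinsupp (M := ℂ) (R := ℂ) (↑(Finset.range (n+1)) : Set ℕ))]
  rw [Module.finrank_finsupp_self]
  simp

lemma single_zero_mem (W : Submodule ℂ DualVermaCarrier)
    (hE : ∀ x ∈ W, Ed x ∈ W) :
    ∀ N : ℕ, ∀ x : DualVermaCarrier, x ∈ W → x ≠ 0 → (∀ k, N < k → x k = 0) →
      Finsupp.single 0 (1:ℂ) ∈ W := by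
  intro N
  induction N with
  | zero =>
      intro x hxW hx0 hsupp
      have h0 : x 0 ≠ 0 := by
        intro h
        apply hx0
        ext k
        rcases Nat.eq_zero_or_pos k with rfl | hk
        · simpa using h
        · simpa using hsupp k hk
      have : Finsupp.single 0 (1:ℂ) = (x 0)⁻¹ • x := by
        ext k
        rcases Nat.eq_zero_or_pos k with rfl | hk
        · simp [inv_mul_cancel₀ h0]
        · rw [Finsupp.smul_apply, hsupp k hk, smul_zero, Finsupp.single_apply,
            if_neg (by omega : ¬ (0:ℕ) = k)]
      rw [this]
      exact W.smul_mem _ hxW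
  | succ N ih =>
      intro x hxW hx0 hsupp
      by_cases hN : x (N+1) = 0
      · refine ih x hxW hx0 (fun k hk => ?_)
        rcases Nat.lt_or_ge (N+1) k with h | h
        · exact hsupp k h
        · have : k = N+1 := by omega
          rw [this]; exact hN
      · refine ih (Ed x) (hE x hxW) ?_ ?_
        · intro h
          apply hN
          have := Finsupp.ext_iff.mp h N
          rw [Ed_apply] at this
          simpa using this
        · intro k hk
          rw [Ed_apply, hsupp (k+1) (by omega), neg_zero]

lemma singles_mem (n : ℕ) (W : Submodule ℂ DualVermaCarrier)
    (hF : ∀ x ∈ W, Fd (n:ℂ) x ∈ W) (h0 : Finsupp.single 0 (1:ℂ) ∈ W) :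
    ∀ k : ℕ, k ≤ n → Finsupp.single k (1:ℂ) ∈ W := by
  intro k
  induction k with
  | zero => intro _; exact h0
  | succ k ih =>
      intro hk
      have hmem := hF _ (ih (by omega))
      rw [Fd_single] at hmem
      have hc : (1 * (-((k:ℂ)+1) * ((n:ℂ) - k))) ≠ 0 := by
        have h1 : ((k:ℂ)+1) ≠ 0 := Nat.cast_add_one_ne_zero k
        have h2 : (n:ℂ) - k ≠ 0 :=
          sub_ne_zero.mpr (by exact_mod_cast (by omega : n ≠ k))
        simpa using mul_ne_zero (neg_ne_zero.mpr h1) h2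
      have := W.smul_mem (1 * (-((k:ℂ)+1) * ((n:ℂ) - k)))⁻¹ hmem
      rwa [smul_smul, inv_mul_cancel₀ hc, one_smul] at this

lemma comm_H (n : ℕ) : (Hd (-(n : ℂ) - 2)) ∘ₗ dmap n = dmap n ∘ₗ (Hd (n : ℂ)) := by
  apply LinearMap.ext; intro x
  apply Finsupp.ext; intro m
  simp only [LinearMap.comp_apply]
  rw [Hd_apply, dmap_apply, dmap_apply, Hd_apply]
  push_cast
  ring

lemma comm_E (n : ℕ) : Ed ∘ₗ dmap n = dmap n ∘ₗ Ed := by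
  apply LinearMap.ext; intro x
  apply Finsupp.ext; intro m
  simp only [LinearMap.comp_apply]
  rw [Ed_apply, dmap_apply, dmap_apply, Ed_apply,
    show m + 1 + (n+1) = m + (n+1) + 1 by omega]

lemma comm_F (n : ℕ) : (Fd (-(n : ℂ) - 2)) ∘ₗ dmap n = dmap n ∘ₗ (Fd (n : ℂ)) := by
  apply LinearMap.ext; intro x
  apply Finsupp.ext; intro m
  simp only [LinearMap.comp_apply]
  cases m with
  | zero =>
      rw [Fd_apply_zero, dmap_apply, show 0 + (n+1) = n + 1 by omega, Fd_apply_succ,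
        sub_self, mul_zero, zero_mul]
  | succ m =>
      rw [Fd_apply_succ, dmap_apply, dmap_apply,
        show m + 1 + (n+1) = (m + (n+1)) + 1 by omega, Fd_apply_succ]
      push_cast
      ring

lemma irred (n : ℕ) (W : Submodule ℂ DualVermaCarrier)
    (hle : W ≤ LinearMap.ker (dmap n))
    (hE : ∀ x ∈ W, Ed x ∈ W) (hF : ∀ x ∈ W, Fd (n:ℂ) x ∈ W) :
    W = ⊥ ∨ W = LinearMap.ker (dmap n) := by
  by_cases hbot : W = ⊥
  · exact Or.inl hbot
  · right
    obtain ⟨x, hxW, hx0⟩ := Submodule.ne_bot_iff W |>.mp hbot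
    have h0 : Finsupp.single 0 (1:ℂ) ∈ W :=
      single_zero_mem W hE n x hxW hx0 ((mem_ker_iff n x).mp (hle hxW))
    have hsingles := singles_mem n W hF h0
    refine le_antisymm hle ?_
    intro y hy
    rw [← Finsupp.sum_single y, Finsupp.sum]
    refine Submodule.sum_mem W ?_
    intro k hk
    have hkn : k ≤ n := by
      by_contra h
      exact (Finsupp.mem_support_iff.mp hk) ((mem_ker_iff n y).mp hy k (by omega))
    have : Finsupp.single k (y k) = (y k) • Finsupp.single k 1 := by simp
    rw [this]
    exact W.smul_mem _ (hsingles k hkn)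

open Classical in
lemma char_eq (n : ℕ) :
    charHalf (n : ℤ) - charHalf (-(n : ℤ) - 2) =
    fun m => if ∃ k : ℕ, k ≤ n ∧ m = (n : ℤ) - 2 * k then (1 : ℤ) else 0 := by
  funext m
  simp only [Pi.sub_apply, charHalf]
  by_cases hR : ∃ k : ℕ, k ≤ n ∧ m = (n : ℤ) - 2 * k
  · obtain ⟨k, hkn, hm⟩ := hR
    have h1 : ∃ k : ℕ, m = (n:ℤ) - 2 * k := ⟨k, hm⟩
    have h2 : ¬ ∃ j : ℕ, m = -(n:ℤ) - 2 - 2 * j := by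
      rintro ⟨j, hj⟩; omega
    rw [if_pos h1, if_neg h2, if_pos ⟨k, hkn, hm⟩, sub_zero]
  · rw [if_neg hR]
    by_cases hP : ∃ k : ℕ, m = (n:ℤ) - 2 * k
    · obtain ⟨k, hm⟩ := hP
      have hkn : n < k := by
        by_contra h
        exact hR ⟨k, by omega, hm⟩
      have h2 : ∃ j : ℕ, m = -(n:ℤ) - 2 - 2 * j :=
        ⟨k - (n+1), by push_cast [Nat.cast_sub (by omega : n+1 ≤ k)]; omega⟩
      rw [if_pos ⟨k, hm⟩, if_pos h2, sub_self]
    · rw [if_neg hP, if_neg, sub_zero]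
      rintro ⟨j, hj⟩
      exact hP ⟨j + n + 1, by push_cast; omega⟩


open Classical in
/-- for `sl(2,ℂ)` and `λ = n ∈ ℕ`, there is a map of `sl(2,ℂ)`-modules
`d : M_n* → M_{-n-2}*` sending `ξ^k` to an appropriate nonzero scalar multiple of
`ξ^{k-n-1}` for `k > n` (and to `0` for `k ≤ n`), such that `0 → M_n* → M_{-n-2}* → 0`
is a complex with kernel the `(n+1)`-dimensional irreducible module `R_n` and zero
cokernel.  In formal characters, `char R_n = char M_n - char M_{-n-2}
= (e^n - e^{-n-2})/(1 - e^{-2})`. -/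
theorem stmt14 (n : ℕ) :
    (∃ d : DualVermaCarrier →ₗ[ℂ] DualVermaCarrier,
      (Hd (-(n : ℂ) - 2)) ∘ₗ d = d ∘ₗ (Hd (n : ℂ)) ∧
      Ed ∘ₗ d = d ∘ₗ Ed ∧
      (Fd (-(n : ℂ) - 2)) ∘ₗ d = d ∘ₗ (Fd (n : ℂ)) ∧
      (∀ k : ℕ, k ≤ n → d (Finsupp.single k 1) = 0) ∧
      (∀ k : ℕ, n < k → ∃ c : ℂ, c ≠ 0 ∧
        d (Finsupp.single k 1) = c • Finsupp.single (k - (n + 1)) 1) ∧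
      Function.Surjective d ∧
      Module.finrank ℂ (LinearMap.ker d) = n + 1 ∧
      (∀ x ∈ LinearMap.ker d, Hd (n : ℂ) x ∈ LinearMap.ker d) ∧
      (∀ x ∈ LinearMap.ker d, Ed x ∈ LinearMap.ker d) ∧
      (∀ x ∈ LinearMap.ker d, Fd (n : ℂ) x ∈ LinearMap.ker d) ∧
      (∀ W : Submodule ℂ DualVermaCarrier, W ≤ LinearMap.ker d →
        (∀ x ∈ W, Hd (n : ℂ) x ∈ W) → (∀ x ∈ W, Ed x ∈ W) → (∀ x ∈ W, Fd (n : ℂ) x ∈ W) →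
        W = ⊥ ∨ W = LinearMap.ker d)) ∧
    charHalf (n : ℤ) - charHalf (-(n : ℤ) - 2) =
      fun m => if ∃ k : ℕ, k ≤ n ∧ m = (n : ℤ) - 2 * k then (1 : ℤ) else 0 := by
  constructor
  · refine ⟨dmap n, comm_H n, comm_E n, comm_F n, ?_, ?_, dmap_surj n, finrank_ker n,
      ?_, ?_, ?_, ?_⟩
    · intro k hk
      rw [dmap_single, if_pos hk, smul_zero]
    · intro k hk
      refine ⟨1, one_ne_zero, ?_⟩
      rw [dmap_single, if_neg (by omega), one_smul]
    · intro x hx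
      rw [mem_ker_iff] at *
      intro k hk
      rw [Hd_apply, hx k hk, mul_zero]
    · intro x hx
      rw [mem_ker_iff] at *
      intro k hk
      rw [Ed_apply, hx (k+1) (by omega), neg_zero]
    · intro x hx
      rw [mem_ker_iff] at *
      intro k hk
      obtain ⟨m, rfl⟩ : ∃ m, k = m + 1 := ⟨k - 1, by omega⟩
      rw [Fd_apply_succ]
      rcases Nat.lt_or_ge n m with h | h
      · rw [hx m h, mul_zero]
      · have hm : m = n := by omega
        subst hm
        rw [sub_self, mul_zero, zero_mul]
    · intro W hle _ hEW hFW
      exact irred n W hle hEW hFW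
  · exact char_eq n
end

section
/- Let X be a topological space with a filtration by closed subsets X = Z₀ ⊇ Z₁ ⊇ ⋯ ⊇ Z_{m+1} = ∅ and F a sheaf of abelian groups on X. Then there is a spectral sequence with E₁^{pq} = H^{p+q}_{Z_p∖Z_{p+1}}(X, F) (local cohomology with supports in the locally closed sets Z_p∖Z_{p+1}) converging to H^{p+q}(X, F). -/
open CategoryTheory TopologicalSpace Opposite

/-- Sheaves of abelian groups on the topological space `X`. -/
abbrev AbSheaf (X : TopCat) : Type _ :=
  CategoryTheory.Sheaf (Opens.grothendieckTopology X) AddCommGrpCat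

/-- `Γ_A(G)`: the global sections of `G` with support contained in `A` (the sections whose
germ vanishes at every point outside `A`). -/
noncomputable def suppSections {X : TopCat} (G : AbSheaf X) (A : Set X) :
    AddSubgroup (G.val.obj (op ⊤)) :=
  ⨅ x : {x : X // x ∉ A}, AddMonoidHom.ker (TopCat.Presheaf.germ G.val ⊤ x.1 trivial).hom

/-- A cohomological spectral sequence of abelian groups: pages `E_r^{pq}`, differentials
`d_r : E_r^{pq} → E_r^{p+r, q-r+1}` squaring to zero, with `E_{r+1}` the cohomology of
`(E_r, d_r)`. -/
structure AbSpectralSequence where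
  /-- the pages -/
  E : ℕ → ℤ → ℤ → AddCommGrpCat
  /-- the differentials `d_r^{pq} : E_r^{pq} → E_r^{p+r, q-r+1}` -/
  d : ∀ (r : ℕ) (p q p' q' : ℤ), p' = p + r → q' = q - r + 1 → (E r p q ⟶ E r p' q')
  d_comp : ∀ (r : ℕ) (p q p' q' p'' q'' : ℤ) (h1 : p' = p + r) (h2 : q' = q - r + 1)
      (h3 : p'' = p' + r) (h4 : q'' = q' - r + 1),
      d r p q p' q' h1 h2 ≫ d r p' q' p'' q'' h3 h4 = 0
  page_iso : ∀ (r : ℕ) (p q pin qin pout qout : ℤ) (h1 : p = pin + r) (h2 : q = qin - r + 1)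
      (h3 : pout = p + r) (h4 : qout = q - r + 1),
      Nonempty ((E (r + 1) p q) ≃+
        (AddMonoidHom.ker (d r p q pout qout h3 h4).hom ⧸
          ((AddMonoidHom.range (d r pin qin p q h1 h2).hom).addSubgroupOf
            (AddMonoidHom.ker (d r p q pout qout h3 h4).hom))))

/-- Convergence of a spectral sequence to the graded groups `H^n`: there is a finite
decreasing filtration of each `H^n` whose graded pieces are, for `r` large (the pages
stabilize), isomorphic to `E_r^{p, n-p}`. -/
structure AbSSConvergesTo (S : AbSpectralSequence) (H : ℤ → AddCommGrpCat) where
  filt : ℤ → ∀ n : ℤ, AddSubgroup (H n)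
  antitone : ∀ (p p' : ℤ), p ≤ p' → ∀ n, filt p' n ≤ filt p n
  exhaustive : ∀ n, ∃ p₀ : ℤ, ∀ p ≤ p₀, filt p n = ⊤
  separated : ∀ n, ∃ p₁ : ℤ, ∀ p ≥ p₁, filt p n = ⊥
  graded : ∀ p q : ℤ, ∃ r₀ : ℕ, ∀ r ≥ r₀,
    Nonempty ((S.E r p q) ≃+
      (filt p (p + q) ⧸ ((filt (p + 1) (p + q)).addSubgroupOf (filt p (p + q)))))

/-- The map on global sections induced by `δ : K n ⟶ K n'`. -/
noncomputable def globMap {X : TopCat} {K : ℤ → AbSheaf X}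
    (δ : ∀ n n' : ℤ, n' = n + 1 → (K n ⟶ K n')) (n n' : ℤ) (h : n' = n + 1) :
    (K n).val.obj (op ⊤) ⟶ (K n').val.obj (op ⊤) :=
  (δ n n' h).hom.app (op ⊤)

/-- Relative cocycles for the filtration by supports: sections of `K^n` supported in
`Z_p` whose differential is supported in `Z_{p+1}`; representing cocycles of the quotient
complex `Γ_{Z_p}(K^•)/Γ_{Z_{p+1}}(K^•)`, whose cohomology is the local cohomology
`H^•_{Z_p∖Z_{p+1}}(X, F)` (Godement). -/
noncomputable def relCocycles {X : TopCat} (Z : ℤ → Set X) {K : ℤ → AbSheaf X}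
    (δ : ∀ n n' : ℤ, n' = n + 1 → (K n ⟶ K n')) (p n : ℤ) :
    AddSubgroup ((K n).val.obj (op ⊤)) :=
  suppSections (K n) (Z p) ⊓
    AddSubgroup.comap (globMap δ n (n + 1) rfl).hom (suppSections (K (n + 1)) (Z (p + 1)))

/-- Relative coboundaries for the filtration by supports. -/
noncomputable def relCoboundaries {X : TopCat} (Z : ℤ → Set X) {K : ℤ → AbSheaf X}
    (δ : ∀ n n' : ℤ, n' = n + 1 → (K n ⟶ K n')) (p n : ℤ) :
    AddSubgroup ((K n).val.obj (op ⊤)) :=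
  (suppSections (K n) (Z (p + 1)) ⊔
      AddSubgroup.map (globMap δ (n - 1) n (by omega)).hom (suppSections (K (n - 1)) (Z p))) ⊓
    relCocycles Z δ p n

/-- `H^n(X, F)` computed from the flabby resolution `K^•`: cohomology of the complex of
global sections. -/
noncomputable def globalCohomology {X : TopCat} {K : ℤ → AbSheaf X}
    (δ : ∀ n n' : ℤ, n' = n + 1 → (K n ⟶ K n')) (n : ℤ) : AddCommGrpCat :=
  AddCommGrpCat.of
    (AddMonoidHom.ker (globMap δ n (n + 1) rfl).hom ⧸
      ((AddMonoidHom.range (globMap δ (n - 1) n (by omega)).hom).addSubgroupOf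
        (AddMonoidHom.ker (globMap δ n (n + 1) rfl).hom)))

/-!
Filtering the complex of global sections `Γ(X, K^•)` by supports, `F^p = Γ_{Z_p}`, gives a
decreasing filtration by subcomplexes (a differential cannot enlarge supports) with `F^p = Γ` for
`p ≤ 0` and `F^p = 0` for `p > m`. Its spectral sequence is the usual one of a filtered complex:
`E_r^p = Z_r^p / B_r^p` with `Z_r^p = {x ∈ F^p | dx ∈ F^{p+r}}` and
`B_r^p = Z_{r-1}^{p+1} + d Z_{r-1}^{p-r+1}`. The kernel of the induced `d_r` is the image of
`Z_{r+1}^p` and its image is that of `d Z_r^{p-r}`; the modular law gives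
`(d Z_r^{p-r} + B_r^p) ∩ Z_{r+1}^p = B_{r+1}^p`, which identifies the cohomology of `d_r` with
`E_{r+1}`. For `r = 1` the page is the cohomology of `Γ_{Z_p}/Γ_{Z_{p+1}}`, and once `r` exceeds the
length of the filtration `Z_r^p = F^p ∩ ker d` and `B_r^p = (F^{p+1} ∩ ker d) + (im d ∩ F^p)`,
whose quotient is the `p`-th graded piece of the induced filtration on `H^n`.
-/

open AddSubgroup QuotientAddGroup

namespace AddSubgroup

variable {G H : Type*} [AddCommGroup G] [AddCommGroup H]

noncomputable def quotientMapEquiv (f : G →+ H) (A B : AddSubgroup G) :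
    A ⧸ (B ⊔ f.ker).addSubgroupOf A ≃+ A.map f ⧸ (B.map f).addSubgroupOf (A.map f) :=
  (quotientAddEquivOfEq (by ext a; simp [mem_addSubgroupOf, ← comap_map_eq])).trans
    (quotientKerEquivOfSurjective ((mk' _).comp (f.addSubgroupMap A))
      ((mk'_surjective _).comp (f.addSubgroupMap_surjective A)))

noncomputable def addSubgroupOfQuotientEquiv {A Z : AddSubgroup G} (h : A ≤ Z)
    (X : AddSubgroup Z) :
    A.addSubgroupOf Z ⧸ X.addSubgroupOf (A.addSubgroupOf Z) ≃+
      A ⧸ (X.map Z.subtype).addSubgroupOf A :=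
  QuotientAddGroup.congr _ _ (addSubgroupOfEquivOfLe h) (by
    rw [map_equiv_eq_comap_symm]
    ext ⟨x, hx⟩
    simp only [mem_comap, mem_addSubgroupOf, mem_map]
    exact ⟨fun hX => ⟨_, hX, rfl⟩, by rintro ⟨y, hy, rfl⟩; exact hy⟩)

end AddSubgroup

namespace FilteredComplex

section

variable {C : ℤ → Type*} [∀ n, AddCommGroup (C n)]
  (d : ∀ n n' : ℤ, n' = n + 1 → C n →+ C n') (F : ℤ → ∀ n, AddSubgroup (C n))

/- `cycles d F r p n` and `boundaries d F r p n` are `Z_r^p` and `B_r^p` in total degree `n`.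
The differential takes a proof of `n' = n + 1` so that it can be applied between degrees that are
only propositionally consecutive. -/
def cycles (r p n : ℤ) : AddSubgroup (C n) :=
  F p n ⊓ (F (p + r) (n + 1)).comap (d n (n + 1) rfl)

def boundaries (r p n : ℤ) : AddSubgroup (C n) :=
  cycles d F (r - 1) (p + 1) n ⊔
    (cycles d F (r - 1) (p - r + 1) (n - 1)).map (d (n - 1) n (by omega))

abbrev page (r p n : ℤ) : Type _ :=
  cycles d F r p n ⧸ (boundaries d F r p n).addSubgroupOf (cycles d F r p n)

abbrev cohomology (n : ℤ) : Type _ :=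
  (d n (n + 1) rfl).ker ⧸ (d (n - 1) n (by omega)).range.addSubgroupOf (d n (n + 1) rfl).ker

def cohomologyFiltration (p n : ℤ) : AddSubgroup (cohomology d n) :=
  ((F p n ⊓ (d n (n + 1) rfl).ker).addSubgroupOf (d n (n + 1) rfl).ker).map (mk' _)

variable {d F}

theorem mem_cycles {r p n n' : ℤ} (h : n' = n + 1) {x : C n} :
    x ∈ cycles d F r p n ↔ x ∈ F p n ∧ d n n' h x ∈ F (p + r) n' := by
  subst h; rfl

theorem cycles_mono (hF : Antitone F) {r r' p p' n : ℤ} (hp : p ≤ p') (hr : p + r ≤ p' + r') :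
    cycles d F r' p' n ≤ cycles d F r p n :=
  inf_le_inf (hF hp n) (comap_mono (hF hr _))

theorem boundaries_eq {r p : ℤ} (n₀ n : ℤ) (h : n = n₀ + 1) :
    boundaries d F r p n = cycles d F (r - 1) (p + 1) n ⊔
      (cycles d F (r - 1) (p - r + 1) n₀).map (d n₀ n h) := by
  obtain rfl : n₀ = n - 1 := by omega
  rfl

theorem cycles_inf_cycles (hF : Antitone F) {r p n : ℤ} :
    cycles d F (r - 1) (p + 1) n ⊓ cycles d F (r + 1) p n = cycles d F r (p + 1) n := by
  refine le_antisymm (fun x hx => (mem_cycles rfl).2 ⟨hx.1.1, ?_⟩)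
    (le_inf (cycles_mono hF le_rfl (by omega)) (cycles_mono hF (by omega) (by omega)))
  rw [show p + 1 + r = p + (r + 1) by ring]
  exact ((mem_cycles rfl).1 hx.2).2

theorem cycles_eq_of_eq_bot {r p n : ℤ} (h : F (p + r) (n + 1) = ⊥) :
    cycles d F r p n = F p n ⊓ (d n (n + 1) rfl).ker := by
  rw [cycles, h, AddMonoidHom.comap_bot]

theorem map_cycles_of_eq_top {r p m n : ℤ} (h : n = m + 1) (htop : F p m = ⊤) :
    (cycles d F r p m).map (d m n h) = (d m n h).range ⊓ F (p + r) n := by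
  subst h
  rw [cycles, htop, top_inf_eq, map_comap_eq]

theorem boundaries_eq_of_eq_bot_of_eq_top {r p n : ℤ} (hbot : F (p + r) (n + 1) = ⊥)
    (htop : F (p - r + 1) (n - 1) = ⊤) :
    boundaries d F r p n =
      F (p + 1) n ⊓ (d n (n + 1) rfl).ker ⊔ (d (n - 1) n (by omega)).range ⊓ F p n := by
  rw [boundaries, map_cycles_of_eq_top _ htop, show p - r + 1 + (r - 1) = p by ring,
    cycles_eq_of_eq_bot (by rwa [show p + 1 + (r - 1) = p + r by ring])]

theorem cycles_zero (hdF : ∀ p n n' (h : n' = n + 1), F p n ≤ (F p n').comap (d n n' h))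
    {p n : ℤ} : cycles d F 0 p n = F p n := by
  rw [cycles, add_zero, inf_of_le_left (hdF p n (n + 1) rfl)]

theorem boundaries_one (hdF : ∀ p n n' (h : n' = n + 1), F p n ≤ (F p n').comap (d n n' h))
    {p n : ℤ} :
    boundaries d F 1 p n = F (p + 1) n ⊔ (F p (n - 1)).map (d (n - 1) n (by omega)) := by
  rw [boundaries, sub_self, sub_add_cancel, cycles_zero hdF, cycles_zero hdF]

noncomputable def pageEquivCohomologyGraded (hF : Antitone F) {r p n : ℤ}
    (hbot : F (p + r) (n + 1) = ⊥) (htop : F (p - r + 1) (n - 1) = ⊤) :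
    page d F r p n ≃+ cohomologyFiltration d F p n ⧸
      (cohomologyFiltration d F (p + 1) n).addSubgroupOf (cohomologyFiltration d F p n) :=
  let K := (d n (n + 1) rfl).ker
  let N := (d (n - 1) n (by omega)).range.addSubgroupOf K
  let A := F p n ⊓ K
  let Y := F (p + 1) n ⊓ K
  let X := Y.addSubgroupOf K ⊔ (mk' N).ker
  have hY : Y ≤ A := inf_le_inf_right _ (hF (by omega) n)
  have hB : (Y ⊔ (d (n - 1) n (by omega)).range ⊓ F p n).addSubgroupOf A =
      (X.map K.subtype).addSubgroupOf A := by
    rw [addSubgroupOf_inj, AddSubgroup.map_sup, addSubgroupOf_map_subtype, ker_mk',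
      addSubgroupOf_map_subtype, inf_of_le_left (inf_le_right : Y ≤ K),
      sup_inf_assoc_of_le _ hY, sup_inf_assoc_of_le _ hY, inf_assoc, inf_assoc,
      inf_of_le_right (inf_le_left : A ≤ F p n), inf_of_le_right (inf_le_right : A ≤ K)]
  (equivQuotientAddSubgroupOfOfEq (boundaries_eq_of_eq_bot_of_eq_top hbot htop)
      (cycles_eq_of_eq_bot hbot)).trans <|
    (quotientAddEquivOfEq hB).trans <|
    (addSubgroupOfQuotientEquiv inf_le_right X).symm.trans <|
    quotientMapEquiv (mk' N) (A.addSubgroupOf K) (Y.addSubgroupOf K)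

variable (hd : ∀ (n n' n'' : ℤ) (h : n' = n + 1) (h' : n'' = n' + 1) (x : C n),
    d n' n'' h' (d n n' h x) = 0)
include hd

theorem d_mem_cycles {r r' p p' n n' : ℤ} (h : n' = n + 1) (hp : p' = p + r) {x : C n}
    (hx : x ∈ cycles d F r p n) : d n n' h x ∈ cycles d F r' p' n' := by
  subst hp
  refine (mem_cycles rfl).2 ⟨((mem_cycles h).1 hx).2, ?_⟩
  rw [hd]
  exact zero_mem _

theorem map_boundaries_le {r p p' n n' : ℤ} (h : n' = n + 1) (hp : p' = p + r) :
    (boundaries d F r p n).map (d n n' h) ≤ boundaries d F r p' n' := by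
  rw [boundaries_eq n n' h, boundaries_eq (n - 1) n (by omega), AddSubgroup.map_sup]
  refine sup_le (le_sup_of_le_right (map_mono (le_of_eq ?_))) ?_
  · rw [show p' - r + 1 = p + 1 by omega]
  · rintro _ ⟨_, ⟨y, -, rfl⟩, rfl⟩
    rw [hd]
    exact zero_mem _

def cyclesDiff (r p n p' n' : ℤ) (h : n' = n + 1) (hp : p' = p + r) :
    cycles d F r p n →+ cycles d F r p' n' :=
  AddMonoidHom.codRestrict ((d n n' h).comp (cycles d F r p n).subtype) _
    fun x => d_mem_cycles hd h hp x.2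

theorem boundaries_le_comap_cyclesDiff (r p n p' n' : ℤ) (h : n' = n + 1) (hp : p' = p + r) :
    (boundaries d F r p n).addSubgroupOf (cycles d F r p n) ≤
      ((boundaries d F r p' n').addSubgroupOf (cycles d F r p' n')).comap
        (cyclesDiff hd r p n p' n' h hp) :=
  fun x hx => map_boundaries_le hd h hp ⟨x, hx, rfl⟩

def pageDiff (r p n p' n' : ℤ) (h : n' = n + 1) (hp : p' = p + r) :
    page d F r p n →+ page d F r p' n' :=
  QuotientAddGroup.map _ _ _ (boundaries_le_comap_cyclesDiff hd r p n p' n' h hp)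

theorem pageDiff_pageDiff (r p n p' n' p'' n'' : ℤ) (h : n' = n + 1) (hp : p' = p + r)
    (h' : n'' = n' + 1) (hp' : p'' = p' + r) (ξ : page d F r p n) :
    pageDiff hd r p' n' p'' n'' h' hp' (pageDiff hd r p n p' n' h hp ξ) = 0 := by
  induction ξ using QuotientAddGroup.induction_on with
  | H x =>
    have : cyclesDiff hd r p' n' p'' n'' h' hp' (cyclesDiff hd r p n p' n' h hp x) = 0 :=
      Subtype.ext (hd n n' n'' h h' x)
    exact congrArg QuotientAddGroup.mk this

theorem range_pageDiff {r p n : ℤ} :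
    (pageDiff (F := F) hd r (p - r) (n - 1) p n (by omega) (by omega)).range =
      (cyclesDiff hd r (p - r) (n - 1) p n (by omega) (by omega)).range.map (mk' _) := by
  rw [AddMonoidHom.range_eq_map, ← (mk' _).range_eq_top.2 (mk'_surjective _),
    ← AddMonoidHom.range_comp, ← AddMonoidHom.range_comp]
  rfl

theorem map_subtype_range_cyclesDiff (r p n p' n' : ℤ) (h : n' = n + 1) (hp : p' = p + r) :
    (cyclesDiff hd r p n p' n' h hp).range.map (cycles d F r p' n').subtype =
      (cycles d F r p n).map (d n n' h) := by
  rw [← AddMonoidHom.range_comp]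
  change ((d n n' h).comp (cycles d F r p n).subtype).range = _
  rw [AddMonoidHom.range_comp, range_subtype]

variable (hF : Antitone F)
include hF

theorem boundaries_le_cycles {r p n : ℤ} : boundaries d F r p n ≤ cycles d F r p n :=
  sup_le (cycles_mono hF (by omega) (by omega))
    (map_le_iff_le_comap.2 fun _ hx => d_mem_cycles hd _ (by omega) hx)

theorem cycles_inf_comap_boundaries {r p n : ℤ} :
    cycles d F r p n ⊓ (boundaries d F r (p + r) (n + 1)).comap (d n (n + 1) rfl) =
      cycles d F (r + 1) p n ⊔ boundaries d F r p n := by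
  refine le_antisymm (fun x hx => ?_) (sup_le (le_inf ?_ ?_) (le_inf ?_ ?_))
  · obtain ⟨hx, hdx⟩ := mem_inf.1 hx
    rw [mem_comap, boundaries_eq n (n + 1) rfl, mem_sup] at hdx
    obtain ⟨z, hz, _, ⟨w, hw, rfl⟩, hzw⟩ := hdx
    rw [show p + r - r + 1 = p + 1 by ring] at hw
    have hxw : x - w ∈ cycles d F (r + 1) p n := by
      refine (mem_cycles rfl).2 ⟨sub_mem hx.1 (hF (by omega) n hw.1), ?_⟩
      rw [map_sub, ← hzw, add_sub_cancel_right, ← add_assoc]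
      exact hz.1
    have hw' : w ∈ boundaries d F r p n := mem_sup_left hw
    simpa using add_mem (mem_sup_left hxw) (mem_sup_right hw')
  · exact cycles_mono hF le_rfl (by omega)
  · exact fun x hx => mem_sup_left (d_mem_cycles hd rfl (by ring) hx)
  · exact boundaries_le_cycles hd hF
  · exact map_le_iff_le_comap.1 (map_boundaries_le hd rfl rfl)

theorem map_cycles_sup_boundaries_inf_cycles {r p n : ℤ} :
    ((cycles d F r (p - r) (n - 1)).map (d (n - 1) n (by omega)) ⊔ boundaries d F r p n) ⊓
      cycles d F (r + 1) p n = boundaries d F (r + 1) p n := by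
  set M := (cycles d F r (p - r) (n - 1)).map (d (n - 1) n (by omega))
  have hM : M ≤ cycles d F (r + 1) p n :=
    map_le_iff_le_comap.2 fun _ hx => d_mem_cycles hd _ (by omega) hx
  have hM' : (cycles d F (r - 1) (p - r + 1) (n - 1)).map (d (n - 1) n (by omega)) ≤ M :=
    map_mono (cycles_mono hF (by omega) (by omega))
  rw [boundaries, sup_comm (cycles d F _ _ _), ← sup_assoc, sup_eq_left.2 hM',
    sup_inf_assoc_of_le _ hM, cycles_inf_cycles hF, sup_comm, boundaries,
    show r + 1 - 1 = r by ring, show p - (r + 1) + 1 = p - r by ring]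

theorem ker_pageDiff {r p n : ℤ} :
    (pageDiff hd r p n (p + r) (n + 1) rfl rfl).ker =
      ((cycles d F (r + 1) p n).addSubgroupOf (cycles d F r p n)).map (mk' _) := by
  have hcomap : ((boundaries d F r (p + r) (n + 1)).addSubgroupOf _).comap
      (cyclesDiff hd r p n (p + r) (n + 1) rfl rfl) =
        (cycles d F (r + 1) p n ⊔ boundaries d F r p n).addSubgroupOf (cycles d F r p n) := by
    rw [← cycles_inf_comap_boundaries hd hF, inf_addSubgroupOf_left]
    rfl
  rw [pageDiff, ker_map, hcomap, addSubgroupOf_sup (cycles_mono hF le_rfl (by omega))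
    (boundaries_le_cycles hd hF), AddSubgroup.map_sup, map_mk'_self, sup_bot_eq]

noncomputable def pageSuccEquiv {r p n pin nin pout nout : ℤ} (hin : n = nin + 1)
    (hpin : p = pin + r) (hout : nout = n + 1) (hpout : pout = p + r) :
    page d F (r + 1) p n ≃+
      (pageDiff (F := F) hd r p n pout nout hout hpout).ker ⧸
        (pageDiff hd r pin nin p n hin hpin).range.addSubgroupOf
          (pageDiff hd r p n pout nout hout hpout).ker := by
  obtain rfl : pin = p - r := by omega
  obtain rfl : nin = n - 1 := by omega
  subst hout hpout
  let N := (boundaries d F r p n).addSubgroupOf (cycles d F r p n)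
  let R := (cyclesDiff (F := F) hd r (p - r) (n - 1) p n hin hpin).range
  have hB : (boundaries d F (r + 1) p n).addSubgroupOf (cycles d F (r + 1) p n) =
      ((R ⊔ N).map (cycles d F r p n).subtype).addSubgroupOf (cycles d F (r + 1) p n) := by
    rw [addSubgroupOf_inj, AddSubgroup.map_sup, map_subtype_range_cyclesDiff,
      addSubgroupOf_map_subtype, inf_of_le_left (boundaries_le_cycles hd hF),
      inf_of_le_left (boundaries_le_cycles hd hF), map_cycles_sup_boundaries_inf_cycles hd hF]
  exact (quotientAddEquivOfEq hB).trans <|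
    (addSubgroupOfQuotientEquiv (cycles_mono hF le_rfl (by omega)) (R ⊔ N)).symm.trans <|
    (equivQuotientAddSubgroupOfOfEq (by rw [ker_mk']) rfl).trans <|
    (quotientMapEquiv (mk' N) _ R).trans <|
    equivQuotientAddSubgroupOfOfEq (range_pageDiff hd).symm (ker_pageDiff hd hF).symm

end

section

variable {C : ℤ → Type} [∀ n, AddCommGroup (C n)]
  {d : ∀ n n' : ℤ, n' = n + 1 → C n →+ C n'} {F : ℤ → ∀ n, AddSubgroup (C n)}
  (hd : ∀ (n n' n'' : ℤ) (h : n' = n + 1) (h' : n'' = n' + 1) (x : C n),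
    d n' n'' h' (d n n' h x) = 0)
  (hF : Antitone F)

noncomputable def spectralSequence : AbSpectralSequence where
  E r p q := AddCommGrpCat.of (page d F r p (p + q))
  d r p q p' q' hp _ := AddCommGrpCat.ofHom (pageDiff hd r p (p + q) p' (p' + q') (by omega) hp)
  d_comp r p q p' q' p'' q'' hp _ hp' _ :=
    AddCommGrpCat.ext fun ξ => pageDiff_pageDiff hd _ _ _ _ _ _ _ _ hp _ hp' ξ
  page_iso r p q pin qin pout qout hpin _ hpout _ :=
    ⟨pageSuccEquiv hd hF (by omega) hpin (by omega) hpout⟩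

noncomputable def spectralSequenceConvergesTo (a b : ℤ) (htop : ∀ p ≤ a, ∀ n, F p n = ⊤)
    (hbot : ∀ p, b ≤ p → ∀ n, F p n = ⊥) :
    AbSSConvergesTo (spectralSequence hd hF) (fun n => AddCommGrpCat.of (cohomology d n)) where
  filt := cohomologyFiltration d F
  antitone _ _ h n := map_mono (addSubgroupOf_mono _ (inf_le_inf_right _ (hF h n)))
  exhaustive n := ⟨a, fun p hp => by
    rw [cohomologyFiltration, htop p hp, top_inf_eq, addSubgroupOf_self,
      map_top_of_surjective _ (mk'_surjective _)]⟩
  separated n := ⟨b, fun p hp => by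
    rw [cohomologyFiltration, hbot p hp, bot_inf_eq, bot_addSubgroupOf, AddSubgroup.map_bot]⟩
  graded p q := ⟨(b - p).toNat + (p + 1 - a).toNat, fun r hr =>
    ⟨pageEquivCohomologyGraded hF (hbot _ (by omega) _) (htop _ (by omega) _)⟩⟩

end

end FilteredComplex

section Supports

variable {X : TopCat}

theorem mem_suppSections {G : AbSheaf X} {A : Set X} {s : G.obj.obj (op ⊤)} :
    s ∈ suppSections G A ↔ ∀ x ∉ A, TopCat.Presheaf.germ G.obj ⊤ x trivial s = 0 := by
  simp only [suppSections, mem_iInf, AddMonoidHom.mem_ker, Subtype.forall]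

theorem suppSections_mono {G : AbSheaf X} {A A' : Set X} (h : A ⊆ A') :
    suppSections G A ≤ suppSections G A' :=
  fun _ hs => mem_suppSections.2 fun x hx => mem_suppSections.1 hs x (hx <| h ·)

theorem suppSections_univ (G : AbSheaf X) : suppSections G Set.univ = ⊤ :=
  eq_top_iff.2 fun _ _ => mem_suppSections.2 fun _ hx => absurd trivial hx

theorem suppSections_empty (G : AbSheaf X) : suppSections G ∅ = ⊥ :=
  eq_bot_iff.2 fun s hs => TopCat.Presheaf.section_ext (F := (G : TopCat.Sheaf AddCommGrpCat X))
    ⊤ s 0 fun x _ => by rw [map_zero]; exact mem_suppSections.1 hs x id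

variable {K : ℤ → AbSheaf X} (δ : ∀ n n' : ℤ, n' = n + 1 → (K n ⟶ K n'))

theorem globMap_globMap (hδδ : ∀ (n n' n'' : ℤ) (h : n' = n + 1) (h' : n'' = n' + 1),
      δ n n' h ≫ δ n' n'' h' = 0)
    (n n' n'' : ℤ) (h : n' = n + 1) (h' : n'' = n' + 1) (s : (K n).obj.obj (op ⊤)) :
    (globMap δ n' n'' h').hom ((globMap δ n n' h).hom s) = 0 := by
  simpa [globMap] using congrArg (fun f : K n ⟶ K n'' => (f.hom.app (op ⊤)).hom s) (hδδ n n' n'' h h')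

theorem globMap_mem_suppSections {A : Set X} {n n' : ℤ} (h : n' = n + 1)
    {s : (K n).obj.obj (op ⊤)} (hs : s ∈ suppSections (K n) A) :
    (globMap δ n n' h).hom s ∈ suppSections (K n') A := by
  refine mem_suppSections.2 fun x hx => ?_
  have hcomm := TopCat.Presheaf.stalkFunctor_map_germ_apply ⊤ x trivial (δ n n' h).hom s
  rw [mem_suppSections.1 hs x hx] at hcomm
  exact hcomm.symm.trans (map_zero _)

end Supports

theorem stmt19_general (X : TopCat) (m : ℕ) (Z : ℤ → Set X)
    (hZanti : ∀ p p' : ℤ, p ≤ p' → Z p' ⊆ Z p)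
    (hZ0 : ∀ p : ℤ, p ≤ 0 → Z p = Set.univ)
    (hZtop : ∀ p : ℤ, (m : ℤ) + 1 ≤ p → Z p = ∅)
    (K : ℤ → AbSheaf X) (δ : ∀ n n' : ℤ, n' = n + 1 → (K n ⟶ K n'))
    (hδδ : ∀ (n n' n'' : ℤ) (h : n' = n + 1) (h' : n'' = n' + 1),
      δ n n' h ≫ δ n' n'' h' = 0) :
    ∃ S : AbSpectralSequence,
      (∀ p q : ℤ,
        Nonempty ((S.E 1 p q) ≃+
          (relCocycles Z δ p (p + q) ⧸
            ((relCoboundaries Z δ p (p + q)).addSubgroupOf (relCocycles Z δ p (p + q)))))) ∧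
      Nonempty (AbSSConvergesTo S (globalCohomology δ)) := by
  let d n n' (h : n' = n + 1) := (globMap δ n n' h).hom
  let F p n := suppSections (K n) (Z p)
  have hF : Antitone F := fun p p' h n => suppSections_mono (hZanti p p' h)
  have hdF : ∀ p n n' (h : n' = n + 1), F p n ≤ (F p n').comap (d n n' h) :=
    fun p n n' h s hs => globMap_mem_suppSections δ h hs
  have hE₁ : ∀ p n, (FilteredComplex.boundaries d F 1 p n).addSubgroupOf
      (FilteredComplex.cycles d F 1 p n) =
        (relCoboundaries Z δ p n).addSubgroupOf (FilteredComplex.cycles d F 1 p n) := by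
    intro p n
    rw [FilteredComplex.boundaries_one hdF]
    exact (inf_addSubgroupOf_right _ _).symm
  have htop : ∀ p ≤ 0, ∀ n, F p n = ⊤ := fun p hp n => by
    simp only [F, hZ0 p hp, suppSections_univ]
  have hbot : ∀ p, (m : ℤ) + 1 ≤ p → ∀ n, F p n = ⊥ := fun p hp n => by
    simp only [F, hZtop p hp, suppSections_empty]
  refine ⟨FilteredComplex.spectralSequence (globMap_globMap δ hδδ) hF, fun p q => ?_,
    ⟨FilteredComplex.spectralSequenceConvergesTo _ hF 0 (m + 1) htop hbot⟩⟩
  exact ⟨(quotientAddEquivOfEq (hE₁ p (p + q)) :)⟩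

/-- let `X` be a topological space with a filtration by closed subsets
`X = Z₀ ⊇ Z₁ ⊇ ⋯ ⊇ Z_{m+1} = ∅` and `F` a sheaf of abelian groups on `X`, with a flabby
resolution `0 → F → K⁰ → K¹ → ⋯` (the canonical Godement resolution is one).  Then there
is a spectral sequence with `E₁^{pq} = H^{p+q}_{Z_p∖Z_{p+1}}(X, F)` — realized à la
Godement as the cohomology `(relative cocycles)/(relative coboundaries)` in degree `p+q`
of the quotient complex `Γ_{Z_p}(K^•)/Γ_{Z_{p+1}}(K^•)` of global sections with supports
— converging to `H^{p+q}(X, F)`, the cohomology of the global sections of `K^•`. -/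
theorem stmt19 (X : TopCat) (F : AbSheaf X) (m : ℕ) (Z : ℤ → Set X)
    (hZcl : ∀ p, IsClosed (Z p))
    (hZanti : ∀ p p' : ℤ, p ≤ p' → Z p' ⊆ Z p)
    (hZ0 : ∀ p : ℤ, p ≤ 0 → Z p = Set.univ)
    (hZtop : ∀ p : ℤ, (m : ℤ) + 1 ≤ p → Z p = ∅)
    (K : ℤ → AbSheaf X) (δ : ∀ n n' : ℤ, n' = n + 1 → (K n ⟶ K n'))
    (hδδ : ∀ (n n' n'' : ℤ) (h : n' = n + 1) (h' : n'' = n' + 1),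
      δ n n' h ≫ δ n' n'' h' = 0)
    (hKneg : ∀ n : ℤ, n < 0 → Limits.IsZero (K n))
    (hflabby : ∀ (n : ℤ) (U : Opens X),
      Function.Surjective ((K n).val.map (homOfLE (le_top : U ≤ ⊤)).op))
    (ε : F ⟶ K 0)
    (hres : ∀ x : X,
      Function.Injective ⇑((TopCat.Presheaf.stalkFunctor AddCommGrpCat x).map ε.hom) ∧
      Function.Exact ⇑((TopCat.Presheaf.stalkFunctor AddCommGrpCat x).map ε.hom)
        ⇑((TopCat.Presheaf.stalkFunctor AddCommGrpCat x).map (δ 0 1 rfl).hom) ∧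
      ∀ n : ℤ, 0 ≤ n →
        Function.Exact ⇑((TopCat.Presheaf.stalkFunctor AddCommGrpCat x).map (δ n (n + 1) rfl).hom)
          ⇑((TopCat.Presheaf.stalkFunctor AddCommGrpCat x).map (δ (n + 1) (n + 1 + 1) rfl).hom)) :
    ∃ S : AbSpectralSequence,
      (∀ p q : ℤ,
        Nonempty ((S.E 1 p q) ≃+
          (relCocycles Z δ p (p + q) ⧸
            ((relCoboundaries Z δ p (p + q)).addSubgroupOf (relCocycles Z δ p (p + q)))))) ∧
      Nonempty (AbSSConvergesTo S (globalCohomology δ)) :=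
  stmt19_general X m Z hZanti hZ0 hZtop K δ hδδ
end
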